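/- Let d≥1 and α∈(−1,∞)^d. Then S_φ^α = {φ∈L²(ℝ^d_+,dx) : p_r^α(φ)<∞ for every r>0}; more precisely, for every N∈ℕ one has q_N^α(φ) ≲ p_{N+(d−1)/2}^α(φ), and for every r>0 one has p_r^α(φ) ≲ q_{⌈r⌉+d+1}^α(φ), for all φ∈L²(ℝ^d_+,dx). -/

import Mathlib

open MeasureTheory Real Filter
open scoped ENNReal NNReal BigOperators

noncomputable section

/-- The positive orthant `ℝ^d_+ = (0,∞)^d`. -/
def Rdp (d : ℕ) : Set (Fin d → ℝ) := {x | ∀ i, 0 < x i}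

/-- Lebesgue measure restricted to the positive orthant. -/
def mup (d : ℕ) : Measure (Fin d → ℝ) := volume.restrict (Rdp d)

/-- Euclidean norm on `Fin d → ℝ`. -/
def euclNorm {d : ℕ} (x : Fin d → ℝ) : ℝ := Real.sqrt (∑ i, (x i) ^ 2)

/-- Euclidean distance. -/
def euclDist {d : ℕ} (x y : Fin d → ℝ) : ℝ := euclNorm (x - y)

/-- Laguerre polynomial `L_k^α` via the Rodrigues formula. -/
def laguerreL (k : ℕ) (α : ℝ) (x : ℝ) : ℝ :=
  Real.rpow x (-α) * Real.exp x / (Nat.factorial k) *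
    iteratedDeriv k (fun y => Real.exp (-y) * Real.rpow y ((k : ℝ) + α)) x

/-- One-dimensional Laguerre function of Hermite type. -/
def phi1 (α : ℝ) (k : ℕ) (x : ℝ) : ℝ :=
  Real.sqrt (2 * Real.Gamma (k + 1) / Real.Gamma (k + α + 1)) *
    laguerreL k α (x ^ 2) * Real.rpow x (α + 1 / 2) * Real.exp (-(x ^ 2) / 2)

/-- One-dimensional Laguerre function of convolution type. -/
def ell1 (α : ℝ) (k : ℕ) (x : ℝ) : ℝ :=
  Real.sqrt (2 * Real.Gamma (k + 1) / Real.Gamma (k + α + 1)) *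
    laguerreL k α (x ^ 2) * Real.exp (-(x ^ 2) / 2)

/-- Multi-dimensional Laguerre function of Hermite type. -/
def phiL {d : ℕ} (α : Fin d → ℝ) (k : Fin d → ℕ) (x : Fin d → ℝ) : ℝ :=
  ∏ i, phi1 (α i) (k i) (x i)

/-- Multi-dimensional Laguerre function of convolution type. -/
def ellL {d : ℕ} (α : Fin d → ℝ) (k : Fin d → ℕ) (x : Fin d → ℝ) : ℝ :=
  ∏ i, ell1 (α i) (k i) (x i)

/-- Inner product in `L²(ℝ^d_+, dx)`. -/
def ip {d : ℕ} (f g : (Fin d → ℝ) → ℝ) : ℝ := ∫ x, f x * g x ∂(mup d)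

/-- The weight `x^{2α+1}`. -/
def wgt {d : ℕ} (α : Fin d → ℝ) (x : Fin d → ℝ) : ℝ := ∏ i, Real.rpow (x i) (2 * α i + 1)

/-- The weighted measure `x^{2α+1} dx` on `ℝ^d_+`. -/
def muw {d : ℕ} (α : Fin d → ℝ) : Measure (Fin d → ℝ) :=
  (mup d).withDensity (fun x => ENNReal.ofReal (wgt α x))

/-- Inner product in `L²(ℝ^d_+, x^{2α+1} dx)`. -/
def ipw {d : ℕ} (α : Fin d → ℝ) (f g : (Fin d → ℝ) → ℝ) : ℝ := ∫ x, f x * g x ∂(muw α)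

/-- Length of a multi-index. -/
def kdeg {d : ℕ} (k : Fin d → ℕ) : ℕ := ∑ i, k i

/-- The Schwartz space `S_φ^α` associated with Laguerre expansions of Hermite type. -/
def Sphi {d : ℕ} (α : Fin d → ℝ) : Set ((Fin d → ℝ) → ℝ) :=
  {f | MemLp f 2 (mup d) ∧ ∀ N : ℕ, ∃ C : ℝ, ∀ k : Fin d → ℕ,
    |ip f (phiL α k)| ≤ C / (1 + (kdeg k : ℝ)) ^ N}

/-- The Schwartz space `S_ℓ^α` associated with Laguerre expansions of convolution type. -/
def Sell {d : ℕ} (α : Fin d → ℝ) : Set ((Fin d → ℝ) → ℝ) :=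
  {f | MemLp f 2 (muw α) ∧ ∀ N : ℕ, ∃ C : ℝ, ∀ k : Fin d → ℕ,
    |ipw α f (ellL α k)| ≤ C / (1 + (kdeg k : ℝ)) ^ N}

/-- A function on `ℝ^d` is multi-even if `f(x) = f(|x₁|,…,|x_d|)`. -/
def MultiEven {d : ℕ} (F : (Fin d → ℝ) → ℝ) : Prop := ∀ x, F x = F (fun i => |x i|)

/-- Multi-indices of length `n`. -/
def shell (d n : ℕ) : Finset (Fin d → ℕ) := Finset.Nat.antidiagonalTuple d n

/-- The norm `p_r^α`. -/
def pnorm {d : ℕ} (α : Fin d → ℝ) (r : ℝ) (f : (Fin d → ℝ) → ℝ) : ℝ≥0∞ :=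
  ∑' n : ℕ, ENNReal.ofReal (((n : ℝ) + 1) ^ r *
    Real.sqrt (∑ k ∈ shell d n, (ip f (phiL α k)) ^ 2))

/-- The norm `q_N^α`. -/
def qnorm {d : ℕ} (α : Fin d → ℝ) (N : ℕ) (f : (Fin d → ℝ) → ℝ) : ℝ≥0∞ :=
  ⨆ k : Fin d → ℕ, ENNReal.ofReal ((1 + (kdeg k : ℝ)) ^ N * |ip f (phiL α k)|)

/-- The eigenvalue `λ_n^α = 4n + 2|α| + 2d`. -/
def lam {d : ℕ} (α : Fin d → ℝ) (n : ℕ) : ℝ := 4 * n + 2 * (∑ i, α i) + 2 * d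

/-- The operator `P_{t,m}^α` acting on functions. -/
def Pop {d : ℕ} (α : Fin d → ℝ) (t : ℝ) (m : ℕ) (f : (Fin d → ℝ) → ℝ) :
    (Fin d → ℝ) → ℝ :=
  fun x => ∑' n : ℕ, (t * Real.sqrt (lam α n)) ^ m * Real.exp (-(t * Real.sqrt (lam α n))) *
    ∑ k ∈ shell d n, ip f (phiL α k) * phiL α k x

/-- The Poisson-type kernel `p_{t,m}^α(x,y)`. -/
def pker {d : ℕ} (α : Fin d → ℝ) (t : ℝ) (m : ℕ) (x y : Fin d → ℝ) : ℝ :=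
  ∑' n : ℕ, (t * Real.sqrt (lam α n)) ^ m * Real.exp (-(t * Real.sqrt (lam α n))) *
    ∑ k ∈ shell d n, phiL α k x * phiL α k y

/-- Tempered distributions on `S_φ^α`: linear functionals bounded by some norm `p_r^α`. -/
structure TemperedDual (d : ℕ) (α : Fin d → ℝ) where
  toFun : ((Fin d → ℝ) → ℝ) → ℝ
  add' : ∀ f g, f ∈ Sphi α → g ∈ Sphi α → toFun (f + g) = toFun f + toFun g
  smul' : ∀ (c : ℝ) (f), f ∈ Sphi α → toFun (c • f) = c * toFun f
  cont' : ∃ r > (0 : ℝ), ∃ C : ℝ, ∀ f ∈ Sphi α,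
    ENNReal.ofReal |toFun f| ≤ ENNReal.ofReal C * pnorm α r f

/-- `P_{t,m}^α f` for a tempered distribution `f`, as a function on `ℝ^d_+`. -/
def PopD {d : ℕ} {α : Fin d → ℝ} (f : TemperedDual d α) (t : ℝ) (m : ℕ) :
    (Fin d → ℝ) → ℝ :=
  fun x => f.toFun (fun y => pker α t m x y)

/-- `ℓ^q`-type norm on `ℝ≥0∞`-valued families. -/
def lqNorm {ι : Type*} (q : ℝ≥0∞) (a : ι → ℝ≥0∞) : ℝ≥0∞ :=
  if q = ∞ then ⨆ i, a i else (∑' i, a i ^ q.toReal) ^ (1 / q.toReal)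

/-- The homogeneous Besov quasi-norm `‖f‖_{Ḃ^{σ,L_φ^α,m}_{p,q}}`. -/
def besovNorm {d : ℕ} {α : Fin d → ℝ} (m : ℕ) (σ : ℝ) (p q : ℝ≥0∞)
    (f : TemperedDual d α) : ℝ≥0∞ :=
  if q = ∞ then
    ⨆ t : Set.Ioi (0 : ℝ), ENNReal.ofReal ((t : ℝ) ^ (-σ)) * eLpNorm (PopD f t m) p (mup d)
  else
    (∫⁻ t in Set.Ioi (0 : ℝ),
      (ENNReal.ofReal (t ^ (-σ)) * eLpNorm (PopD f t m) p (mup d)) ^ q.toReal *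
        ENNReal.ofReal (1 / t)) ^ (1 / q.toReal)

/-- The homogeneous Triebel–Lizorkin quasi-norm `‖f‖_{Ḟ^{σ,L_φ^α,m}_{p,q}}` (for `p<∞`). -/
def tlNorm {d : ℕ} {α : Fin d → ℝ} (m : ℕ) (σ : ℝ) (p q : ℝ≥0∞)
    (f : TemperedDual d α) : ℝ≥0∞ :=
  (∫⁻ x in Rdp d,
    (if q = ∞ then
      ⨆ t : Set.Ioi (0 : ℝ), ENNReal.ofReal ((t : ℝ) ^ (-σ) * |PopD f t m x|)
    else
      (∫⁻ t in Set.Ioi (0 : ℝ),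
        (ENNReal.ofReal (t ^ (-σ) * |PopD f t m x|)) ^ q.toReal *
          ENNReal.ofReal (1 / t)) ^ (1 / q.toReal)) ^ p.toReal) ^ (1 / p.toReal)

/-- A dyadic cube in `ℝ^d_+`, determined by its generation `ν` and position `pos ∈ ℕ^d`. -/
structure DyadicCube (d : ℕ) where
  ν : ℤ
  pos : Fin d → ℕ

/-- The underlying set of a dyadic cube: `∏ (m_j 2^ν, (m_j+1) 2^ν]`. -/
def cubeSet {d : ℕ} (Q : DyadicCube d) : Set (Fin d → ℝ) :=
  {x | ∀ i, (Q.pos i : ℝ) * (2 : ℝ) ^ Q.ν < x i ∧ x i ≤ ((Q.pos i : ℝ) + 1) * (2 : ℝ) ^ Q.ν}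

/-- The center of a dyadic cube. -/
def cubeCenter {d : ℕ} (Q : DyadicCube d) : Fin d → ℝ :=
  fun i => ((Q.pos i : ℝ) + 1 / 2) * (2 : ℝ) ^ Q.ν

/-- The volume `|Q| = 2^{νd}` of a dyadic cube. -/
def cubeVol {d : ℕ} (Q : DyadicCube d) : ℝ := ((2 : ℝ) ^ Q.ν) ^ (d : ℕ)

/-- `∑_{|k|=n} ⟨b,φ_k^α⟩²`. -/
def coeffSum {d : ℕ} (α : Fin d → ℝ) (b : (Fin d → ℝ) → ℝ) (n : ℕ) : ℝ :=
  ∑ k ∈ shell d n, (ip b (phiL α k)) ^ 2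

/-- Membership in the domain of the spectral power `(√L_φ^α)^j`. -/
def InDom {d : ℕ} (α : Fin d → ℝ) (j : ℕ) (b : (Fin d → ℝ) → ℝ) : Prop :=
  MemLp b 2 (mup d) ∧ (∑' n : ℕ, ENNReal.ofReal ((lam α n) ^ j * coeffSum α b n)) < ∞

/-- The spectral power `(√L_φ^α)^j b`. -/
def sqrtLpow {d : ℕ} (α : Fin d → ℝ) (j : ℕ) (b : (Fin d → ℝ) → ℝ) :
    (Fin d → ℝ) → ℝ :=
  fun x => ∑' n : ℕ, (Real.sqrt (lam α n)) ^ j *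
    ∑ k ∈ shell d n, ip b (phiL α k) * phiL α k x

/-- `a` is an `(L_φ^α, M, N, σ, p)` molecule associated with the dyadic cube `Q`,
with implicit constant `C`. -/
def IsMolecule {d : ℕ} (α : Fin d → ℝ) (M N : ℕ) (σ : ℝ) (p : ℝ≥0∞) (C : ℝ)
    (Q : DyadicCube d) (a : (Fin d → ℝ) → ℝ) : Prop :=
  ∃ b : (Fin d → ℝ) → ℝ, InDom α (2 * M) b ∧
    (∀ᵐ x ∂(mup d), sqrtLpow α M b x = a x) ∧
    ∀ j ≤ 2 * M, ∀ᵐ x ∂(mup d),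
      |sqrtLpow α j b x| ≤ C * (2 : ℝ) ^ ((Q.ν : ℝ) * ((M : ℝ) - (j : ℝ) + σ)) *
        (cubeVol Q) ^ (-(p⁻¹.toReal)) *
        (1 + euclDist x (cubeCenter Q) / (2 : ℝ) ^ Q.ν) ^ (-((d : ℝ) + (N : ℝ)))

/-- The Besov sequence quasi-norm `[∑_ν (∑_{Q∈D_ν} |s_Q|^p)^{q/p}]^{1/q}`. -/
def besovCoef (d : ℕ) (p q : ℝ≥0∞) (s : DyadicCube d → ℝ) : ℝ≥0∞ :=
  lqNorm q (fun ν : ℤ => lqNorm p (fun k : Fin d → ℕ => ENNReal.ofReal |s ⟨ν, k⟩|))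

/-- The Triebel–Lizorkin sequence quasi-norm
`‖[∑_Q (|s_Q| |Q|^{-1/p} χ_Q)^q]^{1/q}‖_p`. -/
def tlCoef (d : ℕ) (p q : ℝ≥0∞) (s : DyadicCube d → ℝ) : ℝ≥0∞ :=
  (∫⁻ x in Rdp d,
    (lqNorm q (fun Q : DyadicCube d =>
      ENNReal.ofReal (|s Q| * (cubeVol Q) ^ (-(p⁻¹.toReal))) *
        (cubeSet Q).indicator (fun _ => (1 : ℝ≥0∞)) x)) ^ p.toReal) ^ (1 / p.toReal)

/-- `r₀ = min(1,p,q)`. -/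
def rzero (p q : ℝ≥0∞) : ℝ≥0∞ := min 1 (min p q)

/-- `m₀ = d + max(σ,0) + ⌊d(1/r₀ − 1)⌋ + 1`. -/
def mzero (d : ℕ) (σ : ℝ) (p q : ℝ≥0∞) : ℝ :=
  (d : ℝ) + max σ 0 + (⌊(d : ℝ) * (1 / (rzero p q).toReal - 1)⌋ : ℤ) + 1

/-- Convergence of the molecular series `∑_Q s_Q a_Q` to `f` in `(S_φ^α)'`. -/
def HasSumDual {d : ℕ} {α : Fin d → ℝ} (s : DyadicCube d → ℝ)
    (a : DyadicCube d → (Fin d → ℝ) → ℝ) (f : TemperedDual d α) : Prop :=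
  ∀ φ ∈ Sphi α, HasSum (fun Q : DyadicCube d => s Q * ip (a Q) φ) (f.toFun φ)

/-- Second-order partial derivatives summed: the Laplacian of `f` at `x`. -/
def lapl {n : ℕ} (f : (Fin n → ℝ) → ℝ) (x : Fin n → ℝ) : ℝ :=
  ∑ i, fderiv ℝ (fun y => fderiv ℝ f y (Pi.single i 1)) x (Pi.single i 1)

/-- Distributional subharmonicity of `g` on an open set `Ω`. -/
def SubharmonicOnD {n : ℕ} (g : (Fin n → ℝ) → ℝ) (Ω : Set (Fin n → ℝ)) : Prop :=
  ∀ φ : (Fin n → ℝ) → ℝ, ContDiff ℝ (⊤ : ℕ∞) φ → HasCompactSupport φ → tsupport φ ⊆ Ω →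
    (∀ x, 0 ≤ φ x) → 0 ≤ ∫ x in Ω, g x * lapl φ x

/-- `P_m^α f(x,t) = t^{-m} P_{t,m}^α f(x)` for a tempered distribution `f`. -/
def PmD {d : ℕ} {α : Fin d → ℝ} (m : ℕ) (f : TemperedDual d α)
    (x : Fin d → ℝ) (t : ℝ) : ℝ :=
  ∑' n : ℕ, (Real.sqrt (lam α n)) ^ m * Real.exp (-(t * Real.sqrt (lam α n))) *
    ∑ k ∈ shell d n, phiL α k x * f.toFun (phiL α k)

/-- The potential `V^α(x) = |x|² + ∑ (α_i² − 1/4)/x_i²`. -/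
def Vpot {d : ℕ} (α : Fin d → ℝ) (x : Fin d → ℝ) : ℝ :=
  (euclNorm x) ^ 2 + ∑ i, ((α i) ^ 2 - 1 / 4) / (x i) ^ 2

/-- `P_m^α f` as a function on `ℝ^{d+1}` (last coordinate is `t`). -/
def PmDF {d : ℕ} {α : Fin d → ℝ} (m : ℕ) (f : TemperedDual d α) :
    (Fin (d + 1) → ℝ) → ℝ :=
  fun z => PmD m f (Fin.init z) (z (Fin.last d))

/-- The domain `ℝ^d_+ × (0,∞)` inside `ℝ^{d+1}`. -/
def upperDomain (d : ℕ) : Set (Fin (d + 1) → ℝ) :=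
  {z | (∀ i : Fin d, 0 < z i.castSucc) ∧ 0 < z (Fin.last d)}

/-- The modified Bessel function of the first kind `I_ν`. -/
def besselI (ν : ℝ) (z : ℝ) : ℝ :=
  ∑' j : ℕ, Real.rpow (z / 2) (2 * (j : ℝ) + ν) /
    ((Nat.factorial j : ℝ) * Real.Gamma ((j : ℝ) + ν + 1))

/-- The heat kernel `G_u^α(x,y)`. -/
def heatG {d : ℕ} (α : Fin d → ℝ) (u : ℝ) (x y : Fin d → ℝ) : ℝ :=
  Real.rpow (Real.sinh (2 * u)) (-(d : ℝ)) *
    Real.exp (-(1 / 2) * (Real.cosh (2 * u) / Real.sinh (2 * u)) *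
      ((euclNorm x) ^ 2 + (euclNorm y) ^ 2)) *
    ∏ i, Real.sqrt (x i * y i) * besselI (α i) (x i * y i / Real.sinh (2 * u))

/-! ### Auxiliary lemmas for Statement 3 -/

lemma my_mem_shell {d : ℕ} (k : Fin d → ℕ) : k ∈ shell d (kdeg k) := by
  simp [shell, Finset.Nat.mem_antidiagonalTuple, kdeg]

lemma my_abs_le_sqrt {d : ℕ} (α : Fin d → ℝ) (f : (Fin d → ℝ) → ℝ) (k : Fin d → ℕ) :
    |ip f (phiL α k)| ≤ Real.sqrt (∑ k' ∈ shell d (kdeg k), (ip f (phiL α k')) ^ 2) := by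
  rw [← Real.sqrt_sq_eq_abs]
  exact Real.sqrt_le_sqrt (Finset.single_le_sum
    (f := fun k' => (ip f (phiL α k')) ^ 2) (fun _ _ => sq_nonneg _) (my_mem_shell k))

lemma my_card_shell (d n : ℕ) : (shell d n).card ≤ (n + 1) ^ d := by
  have h : shell d n ⊆ Fintype.piFinset (fun _ : Fin d => Finset.range (n + 1)) := by
    intro k hk
    rw [shell, Finset.Nat.mem_antidiagonalTuple] at hk
    rw [Fintype.mem_piFinset]
    intro i
    rw [Finset.mem_range]
    have : k i ≤ n := hk ▸ Finset.single_le_sum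
      (f := fun i => k i) (fun _ _ => Nat.zero_le _) (Finset.mem_univ i)
    omega
  calc (shell d n).card ≤ _ := Finset.card_le_card h
    _ = (n + 1) ^ d := by simp

lemma my_pnorm_mono {d : ℕ} (α : Fin d → ℝ) (f : (Fin d → ℝ) → ℝ) {r r' : ℝ}
    (h : r ≤ r') : pnorm α r f ≤ pnorm α r' f := by
  refine ENNReal.tsum_le_tsum fun n => ENNReal.ofReal_le_ofReal ?_
  refine mul_le_mul_of_nonneg_right ?_ (Real.sqrt_nonneg _)
  have hn : (0:ℝ) ≤ (n : ℝ) := Nat.cast_nonneg n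
  exact Real.rpow_le_rpow_of_exponent_le (by linarith) h

lemma my_q_le_p {d : ℕ} (hd : 1 ≤ d) (α : Fin d → ℝ) (f : (Fin d → ℝ) → ℝ) (N : ℕ) :
    qnorm α N f ≤ pnorm α ((N : ℝ) + ((d : ℝ) - 1) / 2) f := by
  refine iSup_le fun k => ?_
  refine le_trans ?_ (ENNReal.le_tsum (kdeg k))
  refine ENNReal.ofReal_le_ofReal ?_
  have hn : (0:ℝ) ≤ (kdeg k : ℝ) := Nat.cast_nonneg _
  have hd' : (1:ℝ) ≤ (d : ℝ) := by exact_mod_cast hd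
  have h1 : (1 + (kdeg k : ℝ)) ^ N ≤ ((kdeg k : ℝ) + 1) ^ ((N : ℝ) + ((d:ℝ)-1)/2) := by
    rw [add_comm (1:ℝ), ← Real.rpow_natCast ((kdeg k : ℝ) + 1) N]
    refine Real.rpow_le_rpow_of_exponent_le (by linarith) (by linarith)
  exact mul_le_mul h1 (my_abs_le_sqrt α f k) (abs_nonneg _)
    (Real.rpow_nonneg (by linarith) _)

lemma my_C_lt_top : (∑' n : ℕ, ENNReal.ofReal (((n:ℝ)+1) ^ (-(3:ℝ)/2))) < ∞ := by
  have hs : Summable (fun n : ℕ => ((n:ℝ)+1) ^ (-(3:ℝ)/2)) := by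
    have h := Real.summable_nat_rpow.mpr (show (-(3:ℝ)/2) < -1 by norm_num)
    have h2 := (summable_nat_add_iff (f := fun n : ℕ => (n:ℝ) ^ (-(3:ℝ)/2)) 1).mpr h
    convert h2 using 2 with n
    · rfl
    push_cast
    ring_nf
  rw [← ENNReal.ofReal_tsum_of_nonneg (fun n => Real.rpow_nonneg (by positivity) _) hs]
  exact ENNReal.ofReal_lt_top

lemma my_one_le_C : (1:ℝ≥0∞) ≤ ∑' n : ℕ, ENNReal.ofReal (((n:ℝ)+1) ^ (-(3:ℝ)/2)) := by
  refine le_trans ?_ (ENNReal.le_tsum 0)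
  norm_num

lemma my_p_le_q {d : ℕ} (hd : 1 ≤ d) (α : Fin d → ℝ) {r : ℝ} (hr : 0 < r)
    (f : (Fin d → ℝ) → ℝ) :
    pnorm α r f ≤ (∑' n : ℕ, ENNReal.ofReal (((n:ℝ)+1) ^ (-(3:ℝ)/2))) *
      qnorm α (⌈r⌉₊ + d + 1) f := by
  set M : ℕ := ⌈r⌉₊ + d + 1 with hM
  set C : ℝ≥0∞ := ∑' n : ℕ, ENNReal.ofReal (((n:ℝ)+1) ^ (-(3:ℝ)/2)) with hC
  by_cases hQ : qnorm α M f = ∞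
  · rw [hQ, ENNReal.mul_top (by intro h0; rw [hC] at h0; simpa [h0] using my_one_le_C)]
    exact le_top
  set Q : ℝ≥0∞ := qnorm α M f with hQdef
  have hcoef : ∀ k : Fin d → ℕ, (1 + (kdeg k : ℝ)) ^ M * |ip f (phiL α k)| ≤ Q.toReal := by
    intro k
    have h1 : ENNReal.ofReal ((1 + (kdeg k : ℝ)) ^ M * |ip f (phiL α k)|) ≤ Q :=
      le_iSup (fun k : Fin d → ℕ =>
        ENNReal.ofReal ((1 + (kdeg k : ℝ)) ^ M * |ip f (phiL α k)|)) k
    exact (ENNReal.ofReal_le_iff_le_toReal hQ).mp h1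
  have hQnn : 0 ≤ Q.toReal := ENNReal.toReal_nonneg
  have key : ∀ n : ℕ, ((n : ℝ) + 1) ^ r *
      Real.sqrt (∑ k ∈ shell d n, (ip f (phiL α k)) ^ 2) ≤
      Q.toReal * ((n:ℝ)+1) ^ (-(3:ℝ)/2) := by
    intro n
    set P : ℝ := (n : ℝ) + 1 with hP
    have hPpos : 0 < P := by positivity
    have hP1 : 1 ≤ P := by simp [hP]
    set B : ℝ := Q.toReal / P ^ M with hB
    have hBnn : 0 ≤ B := div_nonneg hQnn (by positivity)
    have hck : ∀ k ∈ shell d n, |ip f (phiL α k)| ≤ B := by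
      intro k hk
      have hkd : kdeg k = n := by
        rw [shell, Finset.Nat.mem_antidiagonalTuple] at hk
        exact hk
      have h2 := hcoef k
      rw [hkd] at h2
      rw [hB, le_div_iff₀ (by positivity), mul_comm]
      calc P ^ M * |ip f (phiL α k)| = (1 + (n:ℝ)) ^ M * |ip f (phiL α k)| := by
            rw [hP, add_comm]
        _ ≤ Q.toReal := h2
    have hS : (∑ k ∈ shell d n, (ip f (phiL α k)) ^ 2) ≤ P ^ d * B ^ 2 := by
      calc (∑ k ∈ shell d n, (ip f (phiL α k)) ^ 2)
          ≤ (shell d n).card • (B ^ 2) := by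
            refine Finset.sum_le_card_nsmul _ _ _ fun k hk => ?_
            calc (ip f (phiL α k)) ^ 2 = |ip f (phiL α k)| ^ 2 := (sq_abs _).symm
              _ ≤ B ^ 2 := pow_le_pow_left₀ (abs_nonneg _) (hck k hk) 2
        _ = ((shell d n).card : ℝ) * B ^ 2 := by rw [nsmul_eq_mul]
        _ ≤ P ^ d * B ^ 2 := by
            refine mul_le_mul_of_nonneg_right ?_ (sq_nonneg _)
            calc ((shell d n).card : ℝ) ≤ (((n+1)^d : ℕ) : ℝ) := by
                  exact_mod_cast my_card_shell d n
              _ = P ^ d := by push_cast [hP]; ring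
    have hsq : Real.sqrt (∑ k ∈ shell d n, (ip f (phiL α k)) ^ 2) ≤
        P ^ ((d : ℝ)/2) * B := by
      calc Real.sqrt (∑ k ∈ shell d n, (ip f (phiL α k)) ^ 2)
          ≤ Real.sqrt (P ^ d * B ^ 2) := Real.sqrt_le_sqrt hS
        _ = Real.sqrt (P ^ d) * B := by
            rw [Real.sqrt_mul (by positivity), Real.sqrt_sq hBnn]
        _ = P ^ ((d : ℝ)/2) * B := by
            have hsqe : Real.sqrt (P ^ d) = P ^ ((d:ℝ)/2) := by
              rw [← Real.rpow_natCast P d, Real.sqrt_eq_rpow, ← Real.rpow_mul hPpos.le]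
              congr 1
              ring
            rw [hsqe]
    calc P ^ r * Real.sqrt (∑ k ∈ shell d n, (ip f (phiL α k)) ^ 2)
        ≤ P ^ r * (P ^ ((d : ℝ)/2) * B) := by
          exact mul_le_mul_of_nonneg_left hsq (Real.rpow_nonneg hPpos.le _)
      _ = Q.toReal * P ^ (r + (d:ℝ)/2 - (M:ℝ)) := by
          rw [show r + (d:ℝ)/2 - (M:ℝ) = r + ((d:ℝ)/2 - (M:ℝ)) by ring,
            Real.rpow_add hPpos, Real.rpow_sub hPpos, Real.rpow_natCast, hB]
          ring
      _ ≤ Q.toReal * P ^ (-(3:ℝ)/2) := by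
          refine mul_le_mul_of_nonneg_left ?_ hQnn
          refine Real.rpow_le_rpow_of_exponent_le hP1 ?_
          have hrc : r ≤ (⌈r⌉₊ : ℝ) := Nat.le_ceil r
          have hd' : (1:ℝ) ≤ (d : ℝ) := by exact_mod_cast hd
          have hMc : (M : ℝ) = (⌈r⌉₊ : ℝ) + (d : ℝ) + 1 := by rw [hM]; push_cast; ring
          rw [hMc]
          linarith
  calc pnorm α r f ≤ ∑' n : ℕ, ENNReal.ofReal (Q.toReal * ((n:ℝ)+1) ^ (-(3:ℝ)/2)) :=
        ENNReal.tsum_le_tsum fun n => ENNReal.ofReal_le_ofReal (key n)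
    _ = ∑' n : ℕ, ENNReal.ofReal (((n:ℝ)+1) ^ (-(3:ℝ)/2)) * ENNReal.ofReal Q.toReal := by
        refine tsum_congr fun n => ?_
        rw [mul_comm (Q.toReal), ENNReal.ofReal_mul (Real.rpow_nonneg (by positivity) _)]
    _ = C * Q := by rw [ENNReal.tsum_mul_right, ENNReal.ofReal_toReal hQ]

lemma my_qnorm_lt_top {d : ℕ} (α : Fin d → ℝ) (f : (Fin d → ℝ) → ℝ)
    (hf : f ∈ Sphi α) (N : ℕ) : qnorm α N f < ∞ := by
  obtain ⟨-, h⟩ := hf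
  obtain ⟨Cv, hCv⟩ := h N
  refine lt_of_le_of_lt (iSup_le fun k => ?_) (ENNReal.ofReal_lt_top (r := Cv))
  refine ENNReal.ofReal_le_ofReal ?_
  have hpos : (0:ℝ) < (1 + (kdeg k : ℝ)) ^ N := by positivity
  calc (1 + (kdeg k : ℝ)) ^ N * |ip f (phiL α k)|
      ≤ (1 + (kdeg k : ℝ)) ^ N * (Cv / (1 + (kdeg k : ℝ)) ^ N) :=
        mul_le_mul_of_nonneg_left (hCv k) hpos.le
    _ = Cv := by field_simp

/-- `S_φ^α = {φ ∈ L² : p_r^α(φ) < ∞ for all r > 0}`, with the quantitative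
comparisons `q_N^α ≲ p_{N+(d−1)/2}^α` and `p_r^α ≲ q_{⌈r⌉+d+1}^α`. -/
theorem sphi_norm_equiv (d : ℕ) (hd : 1 ≤ d) (α : Fin d → ℝ) (hα : ∀ i, -1 < α i) :
    (Sphi α = {f : (Fin d → ℝ) → ℝ | MemLp f 2 (mup d) ∧ ∀ r > (0:ℝ), pnorm α r f < ∞}) ∧
    (∀ N : ℕ, ∃ C : ℝ≥0∞, C < ∞ ∧ ∀ f : (Fin d → ℝ) → ℝ, MemLp f 2 (mup d) →
      qnorm α N f ≤ C * pnorm α ((N : ℝ) + ((d : ℝ) - 1) / 2) f) ∧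
    (∀ r : ℝ, 0 < r → ∃ C : ℝ≥0∞, C < ∞ ∧ ∀ f : (Fin d → ℝ) → ℝ, MemLp f 2 (mup d) →
      pnorm α r f ≤ C * qnorm α (⌈r⌉₊ + d + 1) f) := by
  have hd' : (1:ℝ) ≤ (d : ℝ) := by exact_mod_cast hd
  refine ⟨?_, ?_, ?_⟩
  · ext f
    simp only [Set.mem_setOf_eq]
    constructor
    · rintro hf
      obtain ⟨hL2, hcoef⟩ := hf
      refine ⟨hL2, fun r hr => ?_⟩
      have h1 := my_p_le_q hd α hr f
      have h2 := my_qnorm_lt_top α f ⟨hL2, hcoef⟩ (⌈r⌉₊ + d + 1)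
      exact lt_of_le_of_lt h1 (ENNReal.mul_lt_top my_C_lt_top h2)
    · rintro ⟨hL2, hp⟩
      refine ⟨hL2, fun N => ?_⟩
      have hq : qnorm α N f < ∞ := by
        refine lt_of_le_of_lt (my_q_le_p hd α f N) ?_
        refine lt_of_le_of_lt (my_pnorm_mono α f
          (show (N:ℝ) + ((d:ℝ)-1)/2 ≤ (N:ℝ) + ((d:ℝ)-1)/2 + 1 by linarith)) ?_
        refine hp _ ?_
        have : (0:ℝ) ≤ (N : ℝ) := Nat.cast_nonneg N
        linarith
      refine ⟨(qnorm α N f).toReal, fun k => ?_⟩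
      have h1 : ENNReal.ofReal ((1 + (kdeg k : ℝ)) ^ N * |ip f (phiL α k)|) ≤
          qnorm α N f :=
        le_iSup (fun k : Fin d → ℕ =>
          ENNReal.ofReal ((1 + (kdeg k : ℝ)) ^ N * |ip f (phiL α k)|)) k
      have h2 := (ENNReal.ofReal_le_iff_le_toReal hq.ne).mp h1
      rw [le_div_iff₀ (by positivity), mul_comm]
      exact h2
  · intro N
    exact ⟨1, ENNReal.one_lt_top, fun f _ => by
      simpa using my_q_le_p hd α f N⟩
  · intro r hr
    exact ⟨_, my_C_lt_top, fun f _ => my_p_le_q hd α hr f⟩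

end
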